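/- arXiv:0904.1024 — 2 statements merged into one kernel-verified Lean document; each statement's English description precedes it below -/
import Mathlib

section
/- The unordered configuration space B(S^n,2) is the total space of an open n-disc bundle over RP^n; in particular B(S^n,2) is homotopy equivalent to RP^n. -/
noncomputable section

/-- The setoid identifying tuples up to permutation. -/
def permSetoid (X : Type) (n : ℕ) : Setoid (Fin n → X) where
  r f g := ∃ σ : Equiv.Perm (Fin n), f ∘ σ = g
  iseqv := by
    refine ⟨fun f => ⟨1, rfl⟩, ?_, ?_⟩
    · rintro f g ⟨σ, rfl⟩
      exact ⟨σ⁻¹, by funext x; simp⟩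
    · rintro f g h ⟨σ, rfl⟩ ⟨τ, rfl⟩
      exact ⟨σ * τ, by funext x; simp [Equiv.Perm.coe_mul]⟩

/-- The `n`-th symmetric product `SP^n(X) = X^n / S_n`. -/
def SP (X : Type) [TopologicalSpace X] (n : ℕ) : Type := Quotient (permSetoid X n)

instance (X : Type) [TopologicalSpace X] (n : ℕ) : TopologicalSpace (SP X n) :=
  instTopologicalSpaceQuotient

/-- The setoid identifying injective tuples up to permutation. -/
def injSetoid (X : Type) (n : ℕ) : Setoid {f : Fin n → X // Function.Injective f} where
  r f g := ∃ σ : Equiv.Perm (Fin n), f.1 ∘ σ = g.1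
  iseqv := by
    refine ⟨fun f => ⟨1, rfl⟩, ?_, ?_⟩
    · rintro ⟨f, hf⟩ ⟨g, hg⟩ ⟨σ, h⟩
      exact ⟨σ⁻¹, by rw [← h]; funext x; simp⟩
    · rintro ⟨f, hf⟩ ⟨g, hg⟩ ⟨u, hu⟩ ⟨σ, h⟩ ⟨τ, h'⟩
      exact ⟨σ * τ, by rw [← h', ← h]; funext x; simp [Equiv.Perm.coe_mul]⟩

/-- The unordered configuration space (braid space) `B(X,n)` of `n` pairwise distinct
points in `X`, as the quotient of the ordered configuration space by the symmetric group. -/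
def UConf (X : Type) [TopologicalSpace X] (n : ℕ) : Type := Quotient (injSetoid X n)

instance (X : Type) [TopologicalSpace X] (n : ℕ) : TopologicalSpace (UConf X n) :=
  instTopologicalSpaceQuotient
/-- The antipodal setoid on the unit sphere of `ℝ^{n+1}`. -/
def antipodalSetoid (n : ℕ) : Setoid (Metric.sphere (0 : EuclideanSpace ℝ (Fin (n + 1))) 1) where
  r x y := (x : EuclideanSpace ℝ (Fin (n + 1))) = y ∨
    (x : EuclideanSpace ℝ (Fin (n + 1))) = -(y : EuclideanSpace ℝ (Fin (n + 1)))
  iseqv := by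
    refine ⟨fun x => Or.inl rfl, ?_, ?_⟩
    · rintro x y (h | h)
      · exact Or.inl h.symm
      · exact Or.inr (by rw [h, neg_neg])
    · rintro x y z (h1 | h1) (h2 | h2)
      · exact Or.inl (h1.trans h2)
      · exact Or.inr (h1.trans h2)
      · exact Or.inr (by rw [h1, h2])
      · exact Or.inl (by rw [h1, h2, neg_neg])

/-- Real projective space `ℝP^n` as the quotient of the sphere by the antipodal action. -/
def RP (n : ℕ) : Type := Quotient (antipodalSetoid n)

instance (n : ℕ) : TopologicalSpace (RP n) := instTopologicalSpaceQuotient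

/-!
A pair `{x, y}` of distinct unit vectors is determined by its midpoint `m` and the unit direction
`±w` of `x - y`: then `m ⟂ w`, `‖m‖ < 1` and `x, y = m ± √(1 - ‖m‖²) • w`. So `B(Sⁿ, 2)`
is the open unit disc bundle of the bundle `[w] ↦ wᗮ` over `ℝPⁿ`, with projection
`{x, y} ↦ [w]`. Over the patch `⟪w, v⟫ ≠ 0` every fibre `wᗮ` is identified with `vᗮ ≅ ℝⁿ` by the
orthogonal projection, after blowing the unit balls up radially to the whole space. Shrinking
`m` to `0` deforms `B(Sⁿ, 2)` onto the antipodal pairs `{w, -w}`, a copy of `ℝPⁿ`.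
-/

open scoped RealInnerProductSpace
open Metric Function Topology

theorem isOpenQuotientMap_quotient_mk_of_involutive {X : Type*} [TopologicalSpace X]
    {s : Setoid X} {τ : X → X} (hτ : Continuous τ) (hτ' : Involutive τ)
    (hs : ∀ x y, s x y ↔ y = x ∨ y = τ x) : IsOpenQuotientMap (Quotient.mk s) := by
  refine ⟨Quotient.mk_surjective, continuous_quotient_mk', fun O hO => ?_⟩
  rw [← isQuotientMap_quotient_mk'.isOpen_preimage]
  have hsat : Quotient.mk s ⁻¹' (Quotient.mk s '' O) = O ∪ τ ⁻¹' O := by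
    ext x
    simp only [Set.mem_preimage, Set.mem_image, Quotient.eq, hs, Set.mem_union]
    constructor
    · rintro ⟨y, hy, rfl | rfl⟩
      exacts [Or.inl hy, Or.inr (by rwa [hτ'])]
    · rintro (hx | hx)
      exacts [⟨x, hx, Or.inl rfl⟩, ⟨τ x, hx, Or.inr (hτ' x).symm⟩]
  exact hsat ▸ hO.union (hO.preimage hτ)

theorem Equiv.Perm.eq_one_or_eq_swap_zero_one (σ : Equiv.Perm (Fin 2)) :
    σ = 1 ∨ σ = Equiv.swap 0 1 := by
  revert σ; decide

theorem injective_vecCons_two {X : Type*} {a b : X} (h : a ≠ b) : Injective ![a, b] := by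
  intro i j hij
  fin_cases i <;> fin_cases j <;> simp_all [eq_comm]

section InnerProductGeometry

variable {V : Type*} [NormedAddCommGroup V] [InnerProductSpace ℝ V]

theorem norm_add_smul_eq_one {w m : V} {r : ℝ} (hw : ‖w‖ = 1) (hwm : ⟪w, m⟫ = 0)
    (hr : r ^ 2 = 1 - ‖m‖ ^ 2) : ‖m + r • w‖ = 1 := by
  have hsq : ‖m + r • w‖ ^ 2 = 1 ^ 2 := by
    rw [norm_add_sq_real, real_inner_smul_right, real_inner_comm, hwm, norm_smul, mul_pow,
      Real.norm_eq_abs, sq_abs, hw]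
    linarith
  exact (pow_left_inj₀ (norm_nonneg _) zero_le_one two_ne_zero).1 hsq

theorem norm_midpoint_sq_add_sq {x y : V} (hx : ‖x‖ = 1) (hy : ‖y‖ = 1) :
    ‖midpoint ℝ x y‖ ^ 2 + (‖x - y‖ / 2) ^ 2 = 1 := by
  have h := parallelogram_law_with_norm ℝ x y
  rw [midpoint_eq_smul_add, norm_smul, invOf_eq_inv, hx, hy] at *
  rw [Real.norm_eq_abs, abs_of_pos (by norm_num)]
  nlinarith

theorem inner_sub_midpoint_eq_zero {x y : V} (h : ‖x‖ = ‖y‖) :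
    ⟪x - y, midpoint ℝ x y⟫ = 0 := by
  rw [midpoint_eq_smul_add, real_inner_smul_right, real_inner_comm,
    (real_inner_add_sub_eq_zero_iff x y).2 h, mul_zero]

def orthogonalPart (w m : V) : V := m - ⟪w, m⟫ • w

theorem inner_orthogonalPart {w : V} (hw : ‖w‖ = 1) (m : V) : ⟪w, orthogonalPart w m⟫ = 0 := by
  rw [orthogonalPart, inner_sub_right, real_inner_smul_right, real_inner_self_eq_norm_sq, hw]
  ring

theorem orthogonalPart_of_inner_eq_zero {w m : V} (h : ⟪w, m⟫ = 0) :
    orthogonalPart w m = m := by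
  rw [orthogonalPart, h, zero_smul, sub_zero]

theorem orthogonalPart_neg (w m : V) : orthogonalPart (-w) m = orthogonalPart w m := by
  rw [orthogonalPart, orthogonalPart, inner_neg_left, neg_smul_neg]

theorem norm_orthogonalPart_le {w : V} (hw : ‖w‖ = 1) (m : V) :
    ‖orthogonalPart w m‖ ≤ ‖m‖ := by
  have h : ‖orthogonalPart w m‖ ^ 2 = ‖m‖ ^ 2 - ⟪w, m⟫ ^ 2 := by
    rw [orthogonalPart, norm_sub_sq_real, real_inner_smul_right, real_inner_comm, norm_smul,
      mul_pow, Real.norm_eq_abs, sq_abs, hw]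
    ring
  exact (pow_le_pow_iff_left₀ (norm_nonneg _) (norm_nonneg _) two_ne_zero).1
    (by nlinarith [sq_nonneg ⟪w, m⟫])

theorem continuous_orthogonalPart : Continuous fun p : V × V => orthogonalPart p.1 p.2 := by
  unfold orthogonalPart; fun_prop

end InnerProductGeometry

section FibreChart

theorem Homeomorph.coe_unitBall_apply_eq_smul {E : Type*} [NormedAddCommGroup E]
    [NormedSpace ℝ E] (x : E) : (Homeomorph.unitBall x : E) = (√(1 + ‖x‖ ^ 2))⁻¹ • x :=
  rfl

theorem Homeomorph.unitBall_symm_apply_eq_smul {E : Type*} [NormedAddCommGroup E]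
    [NormedSpace ℝ E] (y : ball (0 : E) 1) :
    Homeomorph.unitBall.symm y = (√(1 - ‖(y : E)‖ ^ 2))⁻¹ • (y : E) :=
  rfl

def LinearIsometryEquiv.ballHomeomorph {E F : Type*} [NormedAddCommGroup E] [NormedSpace ℝ E]
    [NormedAddCommGroup F] [NormedSpace ℝ F] (e : E ≃ₗᵢ[ℝ] F) (r : ℝ) :
    ball (0 : E) r ≃ₜ ball (0 : F) r :=
  e.toHomeomorph.subtype fun x => by simp

variable {V : Type*} [NormedAddCommGroup V] [InnerProductSpace ℝ V] (v : V)

/-- The inverse of the orthogonal projection `wᗮ → vᗮ`, which is bijective when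
`⟪w, v⟫ ≠ 0`. -/
def obliqueLift (w : V) (u : (ℝ ∙ v)ᗮ) : V := (u : V) - (⟪w, (u : V)⟫ / ⟪w, v⟫) • v

theorem inner_obliqueLift {w : V} (hwv : ⟪w, v⟫ ≠ 0) (u : (ℝ ∙ v)ᗮ) :
    ⟪w, obliqueLift v w u⟫ = 0 := by
  rw [obliqueLift, inner_sub_right, real_inner_smul_right, div_mul_cancel₀ _ hwv, sub_self]

theorem obliqueLift_neg (w : V) : obliqueLift v (-w) = obliqueLift v w := by
  ext u
  rw [obliqueLift, obliqueLift, inner_neg_left, inner_neg_left, neg_div_neg_eq]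

theorem orthogonalProjectionOnto_obliqueLift (w : V) (u : (ℝ ∙ v)ᗮ) :
    (ℝ ∙ v)ᗮ.orthogonalProjectionOnto (obliqueLift v w u) = u := by
  rw [obliqueLift, map_sub, map_smul, Submodule.orthogonalProjectionOnto_mem_subspace_eq_self,
    Submodule.orthogonalProjectionOnto_orthogonalComplement_singleton_eq_zero, smul_zero,
    sub_zero]

theorem obliqueLift_orthogonalProjectionOnto {w x : V} (hwv : ⟪w, v⟫ ≠ 0) (hwx : ⟪w, x⟫ = 0) :
    obliqueLift v w ((ℝ ∙ v)ᗮ.orthogonalProjectionOnto x) = x := by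
  have hproj : ((ℝ ∙ v)ᗮ.orthogonalProjectionOnto x : V) = x - (⟪v, x⟫ / ‖v‖ ^ 2) • v := by
    rw [← Submodule.starProjection_apply, Submodule.starProjection_orthogonal_val,
      Submodule.starProjection_singleton]
    rfl
  rw [obliqueLift, hproj, inner_sub_right, real_inner_smul_right, hwx, zero_sub, neg_div,
    mul_div_assoc, div_self hwv, mul_one, neg_smul, sub_neg_eq_add, sub_add_cancel]

theorem Continuous.obliqueLift {X : Type*} [TopologicalSpace X] {w : X → V}
    {u : X → (ℝ ∙ v)ᗮ} (hw : Continuous w) (hu : Continuous u) (hwv : ∀ x, ⟪w x, v⟫ ≠ 0) :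
    Continuous fun x => _root_.obliqueLift v (w x) (u x) := by
  have hu' : Continuous fun x => (u x : V) := continuous_subtype_val.comp hu
  exact hu'.sub (((hw.inner hu').div (hw.inner continuous_const) hwv).smul continuous_const)

def fibreChart (m : ball (0 : V) 1) : ball (0 : (ℝ ∙ v)ᗮ) 1 :=
  Homeomorph.unitBall ((ℝ ∙ v)ᗮ.orthogonalProjectionOnto (Homeomorph.unitBall.symm m))

def fibreChartInv (w : V) (b : ball (0 : (ℝ ∙ v)ᗮ) 1) : ball (0 : V) 1 :=
  Homeomorph.unitBall (obliqueLift v w (Homeomorph.unitBall.symm b))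

theorem fibreChart_fibreChartInv (w : V) (b : ball (0 : (ℝ ∙ v)ᗮ) 1) :
    fibreChart v (fibreChartInv v w b) = b := by
  rw [fibreChart, fibreChartInv, Homeomorph.symm_apply_apply,
    orthogonalProjectionOnto_obliqueLift, Homeomorph.apply_symm_apply]

theorem fibreChartInv_fibreChart {w : V} (hwv : ⟪w, v⟫ ≠ 0) {m : ball (0 : V) 1}
    (hwm : ⟪w, (m : V)⟫ = 0) : fibreChartInv v w (fibreChart v m) = m := by
  have hwM : ⟪w, Homeomorph.unitBall.symm m⟫ = 0 := by
    rw [Homeomorph.unitBall_symm_apply_eq_smul, real_inner_smul_right, hwm, mul_zero]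
  rw [fibreChart, fibreChartInv, Homeomorph.symm_apply_apply,
    obliqueLift_orthogonalProjectionOnto v hwv hwM, Homeomorph.apply_symm_apply]

theorem inner_fibreChartInv {w : V} (hwv : ⟪w, v⟫ ≠ 0) (b : ball (0 : (ℝ ∙ v)ᗮ) 1) :
    ⟪w, (fibreChartInv v w b : V)⟫ = 0 := by
  rw [fibreChartInv, Homeomorph.coe_unitBall_apply_eq_smul, real_inner_smul_right,
    inner_obliqueLift v hwv, mul_zero]

theorem fibreChartInv_neg (w : V) : fibreChartInv v (-w) = fibreChartInv v w := by
  ext1 b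
  rw [fibreChartInv, fibreChartInv, obliqueLift_neg]

theorem continuous_fibreChart : Continuous (fibreChart v) :=
  Homeomorph.unitBall.continuous.comp
    ((ℝ ∙ v)ᗮ.orthogonalProjectionOnto.continuous.comp Homeomorph.unitBall.symm.continuous)

theorem Continuous.fibreChartInv {X : Type*} [TopologicalSpace X] {w : X → V}
    {b : X → ball (0 : (ℝ ∙ v)ᗮ) 1} (hw : Continuous w) (hb : Continuous b)
    (hwv : ∀ x, ⟪w x, v⟫ ≠ 0) : Continuous fun x => _root_.fibreChartInv v (w x) (b x) :=
  Homeomorph.unitBall.continuous.comp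
    (hw.obliqueLift v (Homeomorph.unitBall.symm.continuous.comp hb) hwv)

end FibreChart

abbrev OrdConf (X : Type) : Type := {f : Fin 2 → X // Injective f}

namespace OrdConf

section Swap

variable {X : Type}

def swap (f : OrdConf X) : OrdConf X :=
  ⟨f.1 ∘ Equiv.swap 0 1, f.2.comp (Equiv.swap 0 1).injective⟩

@[simp] theorem swap_apply_zero (f : OrdConf X) : (swap f).1 0 = f.1 1 := rfl

@[simp] theorem swap_apply_one (f : OrdConf X) : (swap f).1 1 = f.1 0 := rfl

theorem swap_involutive : Involutive (swap (X := X)) := fun f => by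
  ext i; fin_cases i <;> rfl

theorem continuous_swap [TopologicalSpace X] : Continuous (swap (X := X)) := by
  refine Continuous.subtype_mk ?_ _
  exact continuous_pi fun i => (continuous_apply (Equiv.swap 0 1 i)).comp continuous_subtype_val

theorem injSetoid_iff (f g : OrdConf X) : injSetoid X 2 f g ↔ g = f ∨ g = swap f := by
  constructor
  · rintro ⟨σ, hσ⟩
    rcases σ.eq_one_or_eq_swap_zero_one with rfl | rfl
    exacts [Or.inl (Subtype.ext hσ.symm), Or.inr (Subtype.ext hσ.symm)]
  · rintro (rfl | rfl)
    exacts [⟨1, rfl⟩, ⟨Equiv.swap 0 1, rfl⟩]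

end Swap

variable {V : Type} [NormedAddCommGroup V]

theorem coe_sub_ne_zero (f : OrdConf (sphere (0 : V) 1)) : (f.1 0 : V) - f.1 1 ≠ 0 :=
  sub_ne_zero.2 (Subtype.coe_injective.ne (f.2.ne zero_ne_one))

theorem continuous_coe_apply (i : Fin 2) :
    Continuous fun f : OrdConf (sphere (0 : V) 1) => (f.1 i : V) :=
  continuous_subtype_val.comp ((continuous_apply i).comp continuous_subtype_val)

variable [InnerProductSpace ℝ V]

def dir (f : OrdConf (sphere (0 : V) 1)) : sphere (0 : V) 1 :=
  ⟨‖(f.1 0 : V) - f.1 1‖⁻¹ • ((f.1 0 : V) - f.1 1),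
    mem_sphere_zero_iff_norm.2 (norm_smul_inv_norm (coe_sub_ne_zero f))⟩

def mid (f : OrdConf (sphere (0 : V) 1)) : ball (0 : V) 1 :=
  ⟨midpoint ℝ (f.1 0 : V) (f.1 1), by
    have h := norm_midpoint_sq_add_sq (norm_eq_of_mem_sphere (f.1 0))
      (norm_eq_of_mem_sphere (f.1 1))
    have hpos : 0 < ‖(f.1 0 : V) - f.1 1‖ := norm_pos_iff.2 (coe_sub_ne_zero f)
    rw [mem_ball_zero_iff]
    nlinarith [norm_nonneg (midpoint ℝ (f.1 0 : V) (f.1 1))]⟩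

theorem dir_swap (f : OrdConf (sphere (0 : V) 1)) : dir (swap f) = -dir f := by
  ext1
  simp only [dir, swap_apply_zero, swap_apply_one, coe_neg_sphere, ← neg_sub (f.1 0 : V),
    norm_neg, smul_neg]

theorem mid_swap (f : OrdConf (sphere (0 : V) 1)) : mid (swap f) = mid f :=
  Subtype.ext (midpoint_comm _ _)

theorem inner_dir_mid (f : OrdConf (sphere (0 : V) 1)) : ⟪(dir f : V), mid f⟫ = 0 := by
  rw [dir, mid, real_inner_smul_left,
    inner_sub_midpoint_eq_zero (by rw [norm_eq_of_mem_sphere, norm_eq_of_mem_sphere]), mul_zero]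

theorem continuous_dir : Continuous (dir (V := V)) := by
  refine Continuous.subtype_mk ?_ _
  have h := (continuous_coe_apply (V := V) 0).sub (continuous_coe_apply 1)
  exact (h.norm.inv₀ fun f => norm_ne_zero_iff.2 (coe_sub_ne_zero f)).smul h

theorem continuous_mid : Continuous (mid (V := V)) :=
  ((continuous_coe_apply 0).lineMap (continuous_coe_apply 1) continuous_const).subtype_mk _

def halfChord (w m : V) : ℝ := √(1 - ‖orthogonalPart w m‖ ^ 2)

theorem halfChord_neg (w m : V) : halfChord (-w) m = halfChord w m := by
  rw [halfChord, halfChord, orthogonalPart_neg]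

section OfTangent

variable (w : sphere (0 : V) 1) (m : ball (0 : V) 1)

theorem norm_orthogonalPart_lt : ‖orthogonalPart (w : V) m‖ < 1 :=
  (norm_orthogonalPart_le (norm_eq_of_mem_sphere w) m).trans_lt (mem_ball_zero_iff.1 m.2)

theorem halfChord_pos : 0 < halfChord (w : V) m := by
  have := norm_orthogonalPart_lt w m
  exact Real.sqrt_pos.2 (by nlinarith [norm_nonneg (orthogonalPart (w : V) m)])

theorem orthogonalPart_add_smul_mem_sphere {r : ℝ} (hr : r ^ 2 = halfChord (w : V) m ^ 2) :
    orthogonalPart (w : V) m + r • (w : V) ∈ sphere (0 : V) 1 := by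
  have := norm_orthogonalPart_lt w m
  refine mem_sphere_zero_iff_norm.2 (norm_add_smul_eq_one (norm_eq_of_mem_sphere w)
    (inner_orthogonalPart (norm_eq_of_mem_sphere w) _) ?_)
  rw [hr, halfChord, Real.sq_sqrt (by nlinarith [norm_nonneg (orthogonalPart (w : V) m)])]

/-- For `m ⟂ w` this is the pair with midpoint `m` and direction `w`; projecting `m` to `wᗮ`
first makes it defined on all of `sphere × ball`. -/
def ofTangent : OrdConf (sphere (0 : V) 1) :=
  ⟨![⟨_, orthogonalPart_add_smul_mem_sphere w m rfl⟩,
      ⟨_, orthogonalPart_add_smul_mem_sphere w m (neg_sq (halfChord (w : V) m))⟩],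
    injective_vecCons_two fun h => by
      have h' := add_left_cancel (congrArg Subtype.val h)
      have := smul_left_injective ℝ (ne_zero_of_mem_unit_sphere w) h'
      linarith [halfChord_pos w m]⟩

theorem coe_ofTangent_zero :
    ((ofTangent w m).1 0 : V) = orthogonalPart (w : V) m + halfChord (w : V) m • (w : V) :=
  rfl

theorem coe_ofTangent_one :
    ((ofTangent w m).1 1 : V) = orthogonalPart (w : V) m + (-halfChord (w : V) m) • (w : V) :=
  rfl

theorem dir_ofTangent : dir (ofTangent w m) = w := by
  have hsub : ((ofTangent w m).1 0 : V) - (ofTangent w m).1 1 =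
      (2 * halfChord (w : V) m) • (w : V) := by
    rw [coe_ofTangent_zero, coe_ofTangent_one]; module
  have hpos : 0 < 2 * halfChord (w : V) m := by linarith [halfChord_pos w m]
  ext1
  rw [dir, Subtype.coe_mk, hsub, norm_smul, Real.norm_eq_abs, abs_of_pos hpos,
    norm_eq_of_mem_sphere, mul_one, smul_smul, inv_mul_cancel₀ hpos.ne', one_smul]

theorem coe_mid_ofTangent : (mid (ofTangent w m) : V) = orthogonalPart (w : V) m := by
  rw [mid, Subtype.coe_mk, coe_ofTangent_zero, coe_ofTangent_one, midpoint_eq_smul_add,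
    invOf_eq_inv]
  module

theorem mid_ofTangent (h : ⟪(w : V), m⟫ = 0) : mid (ofTangent w m) = m :=
  Subtype.ext ((coe_mid_ofTangent w m).trans (orthogonalPart_of_inner_eq_zero h))

theorem ofTangent_neg : ofTangent (-w) m = swap (ofTangent w m) := by
  refine Subtype.ext (funext fun i => Subtype.ext ?_)
  fin_cases i
  · show orthogonalPart (-(w : V)) m + halfChord (-(w : V)) m • -(w : V) =
      orthogonalPart (w : V) m + (-halfChord (w : V) m) • (w : V)
    rw [orthogonalPart_neg, halfChord_neg, smul_neg, neg_smul]
  · show orthogonalPart (-(w : V)) m + (-halfChord (-(w : V)) m) • -(w : V) =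
      orthogonalPart (w : V) m + halfChord (w : V) m • (w : V)
    rw [orthogonalPart_neg, halfChord_neg, smul_neg, neg_smul, neg_neg]

end OfTangent

theorem ofTangent_dir_mid (f : OrdConf (sphere (0 : V) 1)) : ofTangent (dir f) (mid f) = f := by
  set x : V := (f.1 0 : V)
  set y : V := (f.1 1 : V)
  have hd : ‖x - y‖ ≠ 0 := norm_ne_zero_iff.2 (coe_sub_ne_zero f)
  have horth : orthogonalPart (dir f : V) (mid f) = midpoint ℝ x y :=
    orthogonalPart_of_inner_eq_zero (inner_dir_mid f)
  have hchord : halfChord (dir f : V) (mid f) = ‖x - y‖ / 2 := by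
    rw [halfChord, horth, ← norm_midpoint_sq_add_sq (norm_eq_of_mem_sphere (f.1 0))
      (norm_eq_of_mem_sphere (f.1 1)), add_sub_cancel_left, Real.sqrt_sq (by positivity)]
  have hend : ∀ ε : ℝ, midpoint ℝ x y + (ε * (‖x - y‖ / 2)) • (‖x - y‖⁻¹ • (x - y)) =
      midpoint ℝ x y + (ε / 2) • (x - y) := fun ε => by
    rw [smul_smul]; congr 2; field_simp
  refine Subtype.ext (funext fun i => Subtype.ext ?_)
  fin_cases i
  · show orthogonalPart (dir f : V) (mid f) + halfChord (dir f : V) (mid f) • (dir f : V) = x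
    have := hend 1
    rw [one_mul] at this
    rw [horth, hchord, dir, Subtype.coe_mk, this, midpoint_eq_smul_add, invOf_eq_inv]
    module
  · show orthogonalPart (dir f : V) (mid f) + (-halfChord (dir f : V) (mid f)) • (dir f : V) = y
    have := hend (-1)
    rw [neg_one_mul] at this
    rw [horth, hchord, dir, Subtype.coe_mk, this, midpoint_eq_smul_add, invOf_eq_inv]
    module

theorem continuous_ofTangent :
    Continuous fun p : sphere (0 : V) 1 × ball (0 : V) 1 => ofTangent p.1 p.2 := by
  have hw : Continuous fun p : sphere (0 : V) 1 × ball (0 : V) 1 => (p.1 : V) := by fun_prop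
  have hm : Continuous fun p : sphere (0 : V) 1 × ball (0 : V) 1 => (p.2 : V) := by fun_prop
  have hperp := continuous_orthogonalPart.comp (hw.prodMk hm)
  have hchord : Continuous fun p : sphere (0 : V) 1 × ball (0 : V) 1 =>
      halfChord (p.1 : V) p.2 :=
    (continuous_const.sub (hperp.norm.pow 2)).sqrt
  refine Continuous.subtype_mk (continuous_pi fun i => ?_) _
  fin_cases i
  · exact (hperp.add (hchord.smul hw)).subtype_mk _
  · exact (hperp.add (hchord.neg.smul hw)).subtype_mk _

end OrdConf

namespace UConf

section Quotient

variable {X β : Type} [TopologicalSpace X]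

def mk (f : OrdConf X) : UConf X 2 := Quotient.mk (injSetoid X 2) f

theorem isOpenQuotientMap_mk : IsOpenQuotientMap (mk (X := X)) :=
  isOpenQuotientMap_quotient_mk_of_involutive OrdConf.continuous_swap OrdConf.swap_involutive
    OrdConf.injSetoid_iff

theorem continuous_mk : Continuous (mk (X := X)) := isOpenQuotientMap_mk.continuous

theorem mk_swap (f : OrdConf X) : mk (OrdConf.swap f) = mk f :=
  Quotient.sound ((OrdConf.injSetoid_iff _ _).2 (Or.inr (OrdConf.swap_involutive f).symm))

@[elab_as_elim]
theorem ind {p : UConf X 2 → Prop} (h : ∀ f, p (mk f)) (z : UConf X 2) : p z :=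
  Quotient.ind h z

def lift (g : OrdConf X → β) (hg : ∀ f, g (OrdConf.swap f) = g f) : UConf X 2 → β :=
  Quotient.lift g fun f f' h => by
    rcases (OrdConf.injSetoid_iff f f').1 h with rfl | rfl
    exacts [rfl, (hg f).symm]

theorem continuous_lift [TopologicalSpace β] {g : OrdConf X → β}
    (hg : ∀ f, g (OrdConf.swap f) = g f) (hc : Continuous g) : Continuous (lift g hg) :=
  hc.quotient_lift _

end Quotient

variable {V : Type} [NormedAddCommGroup V] [InnerProductSpace ℝ V]

def mid : UConf (sphere (0 : V) 1) 2 → ball (0 : V) 1 := lift OrdConf.mid OrdConf.mid_swap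

theorem continuous_mid : Continuous (mid (V := V)) :=
  continuous_lift _ OrdConf.continuous_mid

def ofTangent (w : sphere (0 : V) 1) (m : ball (0 : V) 1) : UConf (sphere (0 : V) 1) 2 :=
  mk (OrdConf.ofTangent w m)

theorem ofTangent_neg (w : sphere (0 : V) 1) (m : ball (0 : V) 1) :
    ofTangent (-w) m = ofTangent w m := by
  rw [ofTangent, OrdConf.ofTangent_neg, mk_swap, ofTangent]

theorem mk_eq_ofTangent (f : OrdConf (sphere (0 : V) 1)) :
    mk f = ofTangent (OrdConf.dir f) (OrdConf.mid f) := by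
  rw [ofTangent, OrdConf.ofTangent_dir_mid]

theorem mid_ofTangent {w : sphere (0 : V) 1} {m : ball (0 : V) 1} (h : ⟪(w : V), m⟫ = 0) :
    mid (ofTangent w m) = m :=
  OrdConf.mid_ofTangent w m h

theorem continuous_ofTangent :
    Continuous fun p : sphere (0 : V) 1 × ball (0 : V) 1 => ofTangent p.1 p.2 :=
  continuous_mk.comp OrdConf.continuous_ofTangent

/-- The pair `{w, -w}`. -/
def antipodalPair (w : sphere (0 : V) 1) : UConf (sphere (0 : V) 1) 2 := ofTangent w 0

theorem antipodalPair_neg (w : sphere (0 : V) 1) : antipodalPair (-w) = antipodalPair w :=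
  ofTangent_neg w 0

theorem continuous_antipodalPair : Continuous (antipodalPair (V := V)) :=
  continuous_ofTangent.comp (continuous_id.prodMk continuous_const)

def antipodalRetraction : C(UConf (sphere (0 : V) 1) 2, UConf (sphere (0 : V) 1) 2) where
  toFun := lift (fun f => antipodalPair (OrdConf.dir f)) fun f => by
    rw [OrdConf.dir_swap, antipodalPair_neg]
  continuous_toFun := continuous_lift _ (continuous_antipodalPair.comp OrdConf.continuous_dir)

def shrinkBall (t : unitInterval) (m : ball (0 : V) 1) : ball (0 : V) 1 :=
  ⟨(t : ℝ) • (m : V), by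
    rw [mem_ball_zero_iff, norm_smul, Real.norm_eq_abs, abs_of_nonneg t.2.1]
    exact (mul_le_of_le_one_left (norm_nonneg _) t.2.2).trans_lt (mem_ball_zero_iff.1 m.2)⟩

theorem shrinkBall_zero (m : ball (0 : V) 1) : shrinkBall 0 m = 0 :=
  Subtype.ext (zero_smul ℝ (m : V))

theorem shrinkBall_one (m : ball (0 : V) 1) : shrinkBall 1 m = m :=
  Subtype.ext (one_smul ℝ (m : V))

theorem continuous_shrinkBall :
    Continuous fun p : unitInterval × ball (0 : V) 1 => shrinkBall p.1 p.2 :=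
  ((continuous_subtype_val.comp continuous_fst).smul
    (continuous_subtype_val.comp continuous_snd)).subtype_mk _

def shrinkHomotopy : ContinuousMap.Homotopy (ContinuousMap.id (UConf (sphere (0 : V) 1) 2))
    antipodalRetraction where
  toFun p := lift (fun f => ofTangent (OrdConf.dir f)
      (shrinkBall (unitInterval.symm p.1) (OrdConf.mid f)))
    (fun f => by rw [OrdConf.dir_swap, OrdConf.mid_swap, ofTangent_neg]) p.2
  continuous_toFun := by
    refine (IsOpenQuotientMap.id.prodMap isOpenQuotientMap_mk).continuous_comp_iff.1 ?_
    exact continuous_ofTangent.comp ((OrdConf.continuous_dir.comp continuous_snd).prodMk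
      (continuous_shrinkBall.comp ((unitInterval.continuous_symm.comp continuous_fst).prodMk
        (OrdConf.continuous_mid.comp continuous_snd))))
  map_zero_left z := by
    induction z using ind with
    | h f =>
      show ofTangent _ (shrinkBall (unitInterval.symm 0) _) = mk f
      rw [unitInterval.symm_zero, shrinkBall_one, mk_eq_ofTangent]
  map_one_left z := by
    induction z using ind with
    | h f =>
      show ofTangent _ (shrinkBall (unitInterval.symm 1) _) = ofTangent _ 0
      rw [unitInterval.symm_one, shrinkBall_zero]

end UConf

local notation "𝔼" k => EuclideanSpace ℝ (Fin k)

local notation "𝕊" k => sphere (0 : EuclideanSpace ℝ (Fin (k + 1))) 1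

namespace RP

variable {n : ℕ} {β : Type*}

def mk (w : 𝕊 n) : RP n := Quotient.mk (antipodalSetoid n) w

theorem antipodalSetoid_iff (x y : 𝕊 n) : antipodalSetoid n x y ↔ y = x ∨ y = -x := by
  show (_ ∨ _) ↔ _
  rw [Subtype.ext_iff, Subtype.ext_iff, coe_neg_sphere, eq_comm]
  exact or_congr_right ⟨fun h => by rw [h, neg_neg], fun h => by rw [h, neg_neg]⟩

theorem isOpenQuotientMap_mk : IsOpenQuotientMap (mk (n := n)) :=
  isOpenQuotientMap_quotient_mk_of_involutive continuous_neg neg_involutive antipodalSetoid_iff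

theorem mk_neg (w : 𝕊 n) : mk (-w) = mk w :=
  Quotient.sound ((antipodalSetoid_iff _ _).2 (Or.inr (neg_neg w).symm))

theorem mk_eq_mk_iff {x y : 𝕊 n} : mk x = mk y ↔ y = x ∨ y = -x :=
  Quotient.eq.trans (antipodalSetoid_iff x y)

@[elab_as_elim]
theorem ind {p : RP n → Prop} (h : ∀ w, p (mk w)) (q : RP n) : p q :=
  Quotient.ind h q

def lift (g : (𝕊 n) → β) (hg : ∀ w, g (-w) = g w) : RP n → β :=
  Quotient.lift g fun x y h => by
    rcases (antipodalSetoid_iff x y).1 h with rfl | rfl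
    exacts [rfl, (hg x).symm]

theorem continuous_lift [TopologicalSpace β] {g : (𝕊 n) → β} (hg : ∀ w, g (-w) = g w)
    (hc : Continuous g) : Continuous (lift g hg) :=
  hc.quotient_lift _

end RP

section HomotopyEquiv

variable {n : ℕ}

def chordLine (n : ℕ) : C(UConf (𝕊 n) 2, RP n) where
  toFun := UConf.lift (fun f => RP.mk (OrdConf.dir f)) fun f => by
    rw [OrdConf.dir_swap, RP.mk_neg]
  continuous_toFun :=
    UConf.continuous_lift _ (RP.isOpenQuotientMap_mk.continuous.comp OrdConf.continuous_dir)

theorem chordLine_ofTangent (w : 𝕊 n) (m : ball (0 : 𝔼 (n + 1)) 1) :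
    chordLine n (UConf.ofTangent w m) = RP.mk w :=
  congrArg RP.mk (OrdConf.dir_ofTangent w m)

def antipodalSection (n : ℕ) : C(RP n, UConf (𝕊 n) 2) where
  toFun := RP.lift UConf.antipodalPair UConf.antipodalPair_neg
  continuous_toFun := RP.continuous_lift _ UConf.continuous_antipodalPair

theorem chordLine_comp_antipodalSection :
    (chordLine n).comp (antipodalSection n) = ContinuousMap.id (RP n) := by
  ext q
  induction q using RP.ind with
  | h w => exact chordLine_ofTangent w 0

theorem antipodalSection_comp_chordLine :
    (antipodalSection n).comp (chordLine n) = UConf.antipodalRetraction := by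
  ext z
  induction z using UConf.ind with
  | h f => rfl

def chordLineHomotopyEquiv (n : ℕ) : ContinuousMap.HomotopyEquiv (UConf (𝕊 n) 2) (RP n) where
  toFun := chordLine n
  invFun := antipodalSection n
  left_inv := antipodalSection_comp_chordLine (n := n) ▸ ⟨UConf.shrinkHomotopy.symm⟩
  right_inv := chordLine_comp_antipodalSection (n := n) ▸ ContinuousMap.Homotopic.refl _

end HomotopyEquiv

section Trivialization

variable {n : ℕ} (v : 𝕊 n)

def affinePatch : Set (RP n) := RP.mk '' {w | ⟪(w : 𝔼 (n + 1)), v⟫ ≠ 0}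

theorem mk_mem_affinePatch {w : 𝕊 n} : RP.mk w ∈ affinePatch v ↔ ⟪(w : 𝔼 (n + 1)), v⟫ ≠ 0 := by
  refine ⟨?_, fun h => ⟨w, h, rfl⟩⟩
  rintro ⟨w', hw', hw'w⟩
  rcases RP.mk_eq_mk_iff.1 hw'w with rfl | rfl
  exacts [hw', by rwa [coe_neg_sphere, inner_neg_left, neg_ne_zero]]

theorem isOpen_affinePatch : IsOpen (affinePatch v) :=
  RP.isOpenQuotientMap_mk.isOpenMap _ <|
    isOpen_ne_fun (continuous_subtype_val.inner continuous_const) continuous_const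

theorem mk_mem_affinePatch_self : RP.mk v ∈ affinePatch v := by
  rw [mk_mem_affinePatch, real_inner_self_eq_norm_sq, norm_eq_of_mem_sphere]
  norm_num

def confOfChart (q : RP n) (b : ball (0 : (ℝ ∙ (v : 𝔼 (n + 1)))ᗮ) 1) : UConf (𝕊 n) 2 :=
  RP.lift (fun w => UConf.ofTangent w (fibreChartInv (v : 𝔼 (n + 1)) w b))
    (fun w => by rw [coe_neg_sphere, fibreChartInv_neg, UConf.ofTangent_neg]) q

theorem chordLine_confOfChart (q : RP n) (b : ball (0 : (ℝ ∙ (v : 𝔼 (n + 1)))ᗮ) 1) :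
    chordLine n (confOfChart v q b) = q := by
  induction q using RP.ind with
  | h w => exact chordLine_ofTangent _ _

def patchTrivialization :
    {z // chordLine n z ∈ affinePatch v} ≃ₜ affinePatch v × ball (0 : (ℝ ∙ (v : 𝔼 (n + 1)))ᗮ) 1
    where
  toFun z := (⟨chordLine n z, z.2⟩, fibreChart _ (UConf.mid z.1))
  invFun p := ⟨confOfChart v p.1 p.2, by rw [chordLine_confOfChart]; exact p.1.2⟩
  left_inv := by
    rintro ⟨z, hz⟩
    induction z using UConf.ind with
    | h f =>
      have hfv := (mk_mem_affinePatch v).1 hz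
      refine Subtype.ext ?_
      show UConf.ofTangent _ (fibreChartInv _ _ (fibreChart _ (OrdConf.mid f))) = _
      rw [fibreChartInv_fibreChart _ hfv (OrdConf.inner_dir_mid f), ← UConf.mk_eq_ofTangent]
  right_inv := by
    rintro ⟨⟨q, hq⟩, b⟩
    induction q using RP.ind with
    | h w =>
      have hwv := (mk_mem_affinePatch v).1 hq
      refine Prod.ext (Subtype.ext (chordLine_confOfChart v (RP.mk w) b)) ?_
      show fibreChart _ (UConf.mid (UConf.ofTangent w _)) = b
      rw [UConf.mid_ofTangent (inner_fibreChartInv _ hwv b), fibreChart_fibreChartInv]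
  continuous_toFun :=
    (((chordLine n).continuous.comp continuous_subtype_val).subtype_mk _).prodMk
      ((continuous_fibreChart _).comp (UConf.continuous_mid.comp continuous_subtype_val))
  continuous_invFun := by
    refine ((RP.isOpenQuotientMap_mk.restrictPreimage (affinePatch v)).prodMap
      IsOpenQuotientMap.id).continuous_comp_iff.1 ?_
    have hw : Continuous fun p : RP.mk ⁻¹' affinePatch v ×
        ball (0 : (ℝ ∙ (v : 𝔼 (n + 1)))ᗮ) 1 => (p.1 : 𝕊 n) :=
      continuous_subtype_val.comp continuous_fst
    refine Continuous.subtype_mk (UConf.continuous_ofTangent.comp (hw.prodMk ?_)) _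
    exact (continuous_subtype_val.comp hw).fibreChartInv _ continuous_snd
      fun p => (mk_mem_affinePatch v).1 p.1.2

def orthogonalEquivEuclidean : (ℝ ∙ (v : 𝔼 (n + 1)))ᗮ ≃ₗᵢ[ℝ] 𝔼 n :=
  haveI : Fact (Module.finrank ℝ (𝔼 (n + 1)) = n + 1) := ⟨finrank_euclideanSpace_fin⟩
  (OrthonormalBasis.fromOrthogonalSpanSingleton n (ne_zero_of_mem_unit_sphere v)).repr

end Trivialization

/-- `B(S^n,2)` is the total space of an open `n`-disc bundle over `ℝP^n`: there is a continuous
projection to `ℝP^n` which is locally trivial with fibre the open unit `n`-ball; in particular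
`B(S^n,2)` is homotopy equivalent to `ℝP^n`. -/
theorem braid_space_sphere_two_disc_bundle (n : ℕ) :
    (∃ p : UConf (↥(Metric.sphere (0 : EuclideanSpace ℝ (Fin (n + 1))) 1)) 2 → RP n,
      Continuous p ∧
      ∀ q : RP n, ∃ U : Set (RP n), IsOpen U ∧ q ∈ U ∧
        ∃ e : {z : UConf (↥(Metric.sphere (0 : EuclideanSpace ℝ (Fin (n + 1))) 1)) 2 // p z ∈ U}
            ≃ₜ ↥U × ↥(Metric.ball (0 : EuclideanSpace ℝ (Fin n)) 1),
          ∀ z, ((e z).1 : RP n) = p z.1) ∧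
    Nonempty (ContinuousMap.HomotopyEquiv
      (UConf (↥(Metric.sphere (0 : EuclideanSpace ℝ (Fin (n + 1))) 1)) 2) (RP n)) := by
  refine ⟨⟨chordLine n, (chordLine n).continuous, fun q => ?_⟩, ⟨chordLineHomotopyEquiv n⟩⟩
  obtain ⟨v, rfl⟩ := RP.isOpenQuotientMap_mk.surjective q
  exact ⟨affinePatch v, isOpen_affinePatch v, mk_mem_affinePatch_self v,
    (patchTrivialization v).trans
      ((Homeomorph.refl _).prodCongr ((orthogonalEquivEuclidean v).ballHomeomorph 1)),
    fun z => rfl⟩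
end
end

section
/- For any non-trivial Young subgroup K = S_{k_1} × ⋯ × S_{k_r} of S_n (i.e. some k_i ≥ 2, Σk_i = n), the quotient (S^1)^{(n)}/K of the n-fold smash of the circle is contractible. -/
noncomputable section

/-- The quotient of the `n`-fold smash power `(S¹)^{(n)}` by a Young subgroup `K ⊆ S_n`:
we model `(S¹)^{(n)}/K` as the `n`-torus modulo the fat wedge (tuples containing the basepoint
`1`) and the action of `K = {σ | σ preserves the blocks of c}`, for a block function
`c : Fin n → Fin r`. -/
def SmashPowerModYoung (n r : ℕ) (c : Fin n → Fin r) : Type :=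
  Quotient (Relation.EqvGen.setoid (fun f g : Fin n → Circle =>
    (∃ σ : Equiv.Perm (Fin n), (∀ i, c (σ i) = c i) ∧ f ∘ σ = g) ∨
    ((∃ i, f i = 1) ∧ (∃ i, g i = 1))))

instance (n r : ℕ) (c : Fin n → Fin r) : TopologicalSpace (SmashPowerModYoung n r c) :=
  instTopologicalSpaceQuotient

/-!
Parametrize the torus by the cube `Iⁿ` via `t ↦ exp (2πit)`; this is a quotient map onto
`SmashPowerModYoung n r c`. Fix a block `B` containing two indices `i₀ ≠ j₀`. The deformation at
time `t` multiplies a smallest `B`-coordinate `a_k` by `1 - t`. Two smallest coordinates differ by a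
transposition inside `B`, so downstairs the choice of `k` does not matter, and on each closed piece
`{a | a_k ≤ a_j for all j ∈ B}` the deformation is one continuous formula. It maps the fat wedge
into itself: if the smallest `B`-coordinate is `1`, then all of `B` is `1` and a second coordinate
of `B` keeps the value `1`. At `t = 1` some coordinate is `0`, so the deformation ends at the
basepoint.
-/

open Set Function Topology unitInterval Real

theorem Relation.EqvGen.eq_of_surjective {α β γ : Type*} {p : α → β} (hp : Surjective p)
    {r : β → β → Prop} (hr : ∀ z, r z z) {g : α → γ} (hg : ∀ a b, r (p a) (p b) → g a = g b)
    {a b : α} (h : EqvGen r (p a) (p b)) : g a = g b := by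
  have hsec : ∀ a, g (surjInv hp (p a)) = g a := fun a =>
    hg _ _ (by rw [surjInv_eq hp]; exact hr _)
  suffices ∀ z w, EqvGen r z w → g (surjInv hp z) = g (surjInv hp w) by
    simpa only [hsec] using this _ _ h
  intro z w hzw
  induction hzw with
  | rel z w hzw => exact hg _ _ (by rwa [surjInv_eq hp, surjInv_eq hp])
  | refl => rfl
  | symm _ _ _ ih => exact ih.symm
  | trans _ _ _ _ _ ih₁ ih₂ => exact ih₁.trans ih₂

theorem Equiv.comp_swap_eq_self {α β : Type*} [DecidableEq α] {a : α → β} {k k' : α}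
    (h : a k = a k') : a ∘ Equiv.swap k k' = a := by
  rw [Equiv.comp_swap_eq_update, h, update_eq_self, ← h, update_eq_self]

namespace unitInterval

def expCircle (a : I) : Circle := Circle.exp (2 * π * a)

theorem continuous_expCircle : Continuous expCircle :=
  Circle.exp.continuous.comp (continuous_const.mul continuous_subtype_val)

theorem expCircle_surjective : Surjective expCircle := by
  intro z
  obtain ⟨θ, rfl⟩ := Circle.exp_surjective z
  obtain ⟨y, ⟨hy₀, hy₁⟩, hy⟩ := Circle.periodic_exp.exists_mem_Ico₀ two_pi_pos θ
  refine ⟨⟨y / (2 * π), by positivity, (div_le_one two_pi_pos).2 hy₁.le⟩, ?_⟩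
  rw [hy, expCircle, mul_div_cancel₀ _ two_pi_pos.ne']

theorem expCircle_eq_one_iff {a : I} : expCircle a = 1 ↔ a = 0 ∨ a = 1 := by
  rw [expCircle, Circle.exp_eq_one]
  constructor
  · rintro ⟨m, hm⟩
    have ha : (a : ℝ) = m := by nlinarith [pi_pos]
    have h0 : (0 : ℝ) ≤ m := ha ▸ a.2.1
    have h1 : (m : ℝ) ≤ 1 := ha ▸ a.2.2
    obtain rfl | rfl : m = 0 ∨ m = 1 := by
      have : 0 ≤ m := by exact_mod_cast h0
      have : m ≤ 1 := by exact_mod_cast h1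
      omega
    · exact Or.inl (Subtype.ext (by simpa using ha))
    · exact Or.inr (Subtype.ext (by simpa using ha))
  · rintro (rfl | rfl)
    · exact ⟨0, by simp⟩
    · exact ⟨1, by simp [mul_comm]⟩

theorem eq_of_expCircle_eq {a b : I} (h : expCircle a = expCircle b) (ha : expCircle a ≠ 1) :
    a = b := by
  obtain ⟨m, hm⟩ := Circle.exp_eq_exp.1 h
  have hab : (a : ℝ) = b + m := by nlinarith [pi_pos]
  rcases lt_trichotomy m 0 with hm0 | rfl | hm0
  · refine absurd (expCircle_eq_one_iff.2 (Or.inl (Subtype.ext ?_))) ha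
    have : (m : ℝ) ≤ -1 := by exact_mod_cast Int.le_sub_one_of_lt hm0
    rw [Icc.coe_zero]; linarith [a.2.1, b.2.2]
  · exact Subtype.ext (by simpa using hab)
  · refine absurd (expCircle_eq_one_iff.2 (Or.inr (Subtype.ext ?_))) ha
    have : (1 : ℝ) ≤ m := by exact_mod_cast hm0
    rw [Icc.coe_one]; linarith [a.2.2, b.2.1]

end unitInterval

namespace SmashPowerModYoung

variable {n r : ℕ} (c : Fin n → Fin r)

def mk (a : Fin n → I) : SmashPowerModYoung n r c :=
  Quotient.mk _ fun j => expCircle (a j)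

theorem isQuotientMap_mk : IsQuotientMap (mk c) := by
  have hcont : Continuous fun (a : Fin n → I) j => expCircle (a j) :=
    continuous_pi fun j => continuous_expCircle.comp (continuous_apply j)
  exact isQuotientMap_quotient_mk'.comp
    (hcont.isClosedMap.isQuotientMap hcont (Surjective.piMap fun _ => expCircle_surjective))

variable {c}

theorem mk_comp_perm {τ : Equiv.Perm (Fin n)} (hτ : ∀ i, c (τ i) = c i) (a : Fin n → I) :
    mk c (a ∘ τ) = mk c a :=
  Eq.symm <| Quotient.sound <| Relation.EqvGen.rel _ _ <| Or.inl ⟨τ, hτ, rfl⟩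

theorem mk_eq_mk_of_exists_eq_one {a b : Fin n → I} (ha : ∃ i, expCircle (a i) = 1)
    (hb : ∃ i, expCircle (b i) = 1) : mk c a = mk c b :=
  Quotient.sound (Relation.EqvGen.rel _ _ (Or.inr ⟨ha, hb⟩))

def shrinkAt (t : I) (a : Fin n → I) (k : Fin n) : Fin n → I := update a k (σ t * a k)

theorem shrinkAt_zero (a : Fin n → I) (k : Fin n) : shrinkAt 0 a k = a := by
  simp [shrinkAt]

theorem shrinkAt_one_self (a : Fin n → I) (k : Fin n) : shrinkAt 1 a k k = 0 := by
  simp [shrinkAt]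

theorem shrinkAt_comp_perm (t : I) (a : Fin n → I) (τ : Equiv.Perm (Fin n)) (k : Fin n) :
    shrinkAt t a (τ k) ∘ τ = shrinkAt t (a ∘ τ) k := by
  simp [shrinkAt, update_comp_equiv]

variable (c) (i₀ : Fin n)

def IsBlockMin (a : Fin n → I) (k : Fin n) : Prop :=
  c k = c i₀ ∧ ∀ j, c j = c i₀ → a k ≤ a j

theorem exists_isBlockMin (a : Fin n → I) : ∃ k, IsBlockMin c i₀ a k := by
  obtain ⟨k, hk, hmin⟩ := Finset.exists_min_image {j | c j = c i₀} a ⟨i₀, by simp⟩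
  exact ⟨k, by simpa using hk, fun j hj => hmin j (by simpa using hj)⟩

def blockMin (a : Fin n → I) : Fin n := (exists_isBlockMin c i₀ a).choose

theorem isBlockMin_blockMin (a : Fin n → I) : IsBlockMin c i₀ a (blockMin c i₀ a) :=
  (exists_isBlockMin c i₀ a).choose_spec

def deform (p : I × (Fin n → I)) : SmashPowerModYoung n r c :=
  mk c (shrinkAt p.1 p.2 (blockMin c i₀ p.2))

variable {c i₀}

theorem mk_shrinkAt_eq {t : I} {a : Fin n → I} {k k' : Fin n} (hk : IsBlockMin c i₀ a k)
    (hk' : IsBlockMin c i₀ a k') : mk c (shrinkAt t a k) = mk c (shrinkAt t a k') := by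
  have hτ : ∀ j, c (Equiv.swap k' k j) = c j := fun j => by
    rw [Equiv.swap_apply_def]
    split_ifs <;> subst_vars <;> simp only [hk.1, hk'.1]
  have hak : a k' = a k := le_antisymm (hk'.2 k hk.1) (hk.2 k' hk'.1)
  have h := shrinkAt_comp_perm t a (Equiv.swap k' k) k'
  rw [Equiv.swap_apply_left, Equiv.comp_swap_eq_self hak] at h
  rw [← mk_comp_perm hτ, h]

theorem deform_eq_of_isBlockMin {t : I} {a : Fin n → I} {k : Fin n} (hk : IsBlockMin c i₀ a k) :
    deform c i₀ (t, a) = mk c (shrinkAt t a k) :=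
  mk_shrinkAt_eq (isBlockMin_blockMin c i₀ a) hk

theorem deform_zero (a : Fin n → I) : deform c i₀ (0, a) = mk c a := by
  rw [deform, shrinkAt_zero]

theorem deform_one (a : Fin n → I) : deform c i₀ (1, a) = mk c 0 :=
  mk_eq_mk_of_exists_eq_one ⟨_, by rw [shrinkAt_one_self, expCircle_eq_one_iff]; exact Or.inl rfl⟩
    ⟨i₀, expCircle_eq_one_iff.2 (Or.inl rfl)⟩

theorem deform_comp_perm {τ : Equiv.Perm (Fin n)} (hτ : ∀ i, c (τ i) = c i) (t : I)
    (a : Fin n → I) : deform c i₀ (t, a ∘ τ) = deform c i₀ (t, a) := by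
  obtain ⟨hk, hmin⟩ := isBlockMin_blockMin c i₀ (a ∘ τ)
  have hτk : IsBlockMin c i₀ a (τ (blockMin c i₀ (a ∘ τ))) := by
    refine ⟨(hτ _).trans hk, fun j hj => ?_⟩
    simpa using hmin (τ.symm j) (by rw [← hτ, τ.apply_symm_apply, hj])
  rw [deform_eq_of_isBlockMin hτk, ← mk_comp_perm hτ, shrinkAt_comp_perm]
  rfl

theorem continuous_deform : Continuous (deform c i₀) := by
  let piece : {k // c k = c i₀} → Set (I × (Fin n → I)) :=
    fun k => {p | ∀ j, c j = c i₀ → p.2 k ≤ p.2 j}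
  refine (locallyFinite_of_finite piece).continuous ?_ (fun k => ?_) (fun k => ?_)
  · refine eq_univ_of_forall fun p => mem_iUnion.2 ?_
    obtain ⟨hk, hmin⟩ := isBlockMin_blockMin c i₀ p.2
    exact ⟨⟨_, hk⟩, hmin⟩
  · simp only [piece, ofPred_forall]
    have hcoord : ∀ j, Continuous fun p : I × (Fin n → I) => p.2 j :=
      fun j => (continuous_apply j).comp continuous_snd
    exact isClosed_iInter fun j => isClosed_iInter fun _ => isClosed_le (hcoord k) (hcoord j)
  · refine ContinuousOn.congr ?_ fun p hp => deform_eq_of_isBlockMin (t := p.1) ⟨k.2, hp⟩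
    refine (isQuotientMap_mk c).continuous.comp_continuousOn (Continuous.continuousOn ?_)
    exact continuous_snd.update _
      ((continuous_symm.comp continuous_fst).mul ((continuous_apply _).comp continuous_snd))

theorem exists_shrinkAt_eq_zero_or_one {j₀ : Fin n} (hj₀ : j₀ ≠ i₀) (hc : c j₀ = c i₀) (t : I)
    {a : Fin n → I} {k : Fin n} (hk : IsBlockMin c i₀ a k) (ha : ∃ i, a i = 0 ∨ a i = 1) :
    ∃ i, shrinkAt t a k i = 0 ∨ shrinkAt t a k i = 1 := by
  by_cases hk0 : a k = 0
  · exact ⟨k, Or.inl (by simp [shrinkAt, hk0])⟩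
  obtain ⟨i, hi⟩ := ha
  by_cases hik : i = k
  · subst hik
    obtain ⟨j, hji, hj⟩ : ∃ j, j ≠ i ∧ c j = c i₀ := by
      by_cases h : i = i₀
      · exact ⟨j₀, h ▸ hj₀, hc⟩
      · exact ⟨i₀, Ne.symm h, rfl⟩
    refine ⟨j, Or.inr ?_⟩
    rw [shrinkAt, update_of_ne hji]
    exact le_antisymm le_one' (hi.resolve_left hk0 ▸ hk.2 j hj)
  · exact ⟨i, by rwa [shrinkAt, update_of_ne hik]⟩

theorem deform_eq_of_mk_eq {j₀ : Fin n} (hj₀ : j₀ ≠ i₀) (hc : c j₀ = c i₀) {a b : Fin n → I}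
    (h : mk c a = mk c b) (t : I) : deform c i₀ (t, a) = deform c i₀ (t, b) := by
  have hwedge : ∀ a : Fin n → I, (∃ i, expCircle (a i) = 1) →
      ∃ i, expCircle (shrinkAt t a (blockMin c i₀ a) i) = 1 := by
    simp only [expCircle_eq_one_iff]
    exact fun a => exists_shrinkAt_eq_zero_or_one hj₀ hc t (isBlockMin_blockMin c i₀ a)
  refine Relation.EqvGen.eq_of_surjective (g := fun a => deform c i₀ (t, a))
    (Surjective.piMap fun _ => expCircle_surjective) (fun _ => Or.inl ⟨1, fun _ => rfl, rfl⟩) ?_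
    (Quotient.exact h)
  rintro a b (⟨τ, hτ, hab⟩ | ⟨ha, hb⟩)
  · by_cases ha : ∃ i, expCircle (a i) = 1
    · obtain ⟨i, hi⟩ := ha
      have hb : ∃ i, expCircle (b i) = 1 :=
        ⟨τ.symm i, by simpa [hi] using (congrFun hab (τ.symm i)).symm⟩
      exact mk_eq_mk_of_exists_eq_one (hwedge a ⟨i, hi⟩) (hwedge b hb)
    · have hab : a ∘ τ = b :=
        funext fun i => eq_of_expCircle_eq (congrFun hab i) fun h1 => ha ⟨τ i, h1⟩
      rw [← hab, deform_comp_perm hτ]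
  · exact mk_eq_mk_of_exists_eq_one (hwedge a ha) (hwedge b hb)

def contraction {j₀ : Fin n} (hj₀ : j₀ ≠ i₀) (hc : c j₀ = c i₀) :
    ContinuousMap.Homotopy (ContinuousMap.id (SmashPowerModYoung n r c))
      (ContinuousMap.const _ (mk c 0)) where
  toFun p := deform c i₀ (p.1, surjInv (isQuotientMap_mk c).surjective p.2)
  continuous_toFun := (isQuotientMap_mk c).continuous_lift_prod_right <|
    continuous_deform.congr fun p =>
      deform_eq_of_mk_eq hj₀ hc (surjInv_eq (isQuotientMap_mk c).surjective _).symm p.1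
  map_zero_left x := by
    simp only [deform_zero, surjInv_eq (isQuotientMap_mk c).surjective, ContinuousMap.id_apply]
  map_one_left _ := deform_one _

end SmashPowerModYoung

/-- For any non-trivial Young subgroup `K = S_{k₁} × ⋯ × S_{k_r}` of `S_n` (some block has at
least two elements), the quotient `(S¹)^{(n)}/K` of the `n`-fold smash power of the circle is
contractible. -/
theorem smash_power_mod_young_contractible (n r : ℕ) (c : Fin n → Fin r)
    (hK : ∃ i j : Fin n, i ≠ j ∧ c i = c j) :
    ContractibleSpace (SmashPowerModYoung n r c) := by
  obtain ⟨j₀, i₀, hj₀, hc⟩ := hK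
  exact (contractible_iff_id_nullhomotopic _).2 ⟨_, ⟨SmashPowerModYoung.contraction hj₀ hc⟩⟩
end
end
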